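/- arXiv:gr-qc/9910082 — 2 statements merged into one kernel-verified Lean document; each statement's English description precedes it below -/
import Mathlib

section
/- Let h_{ab} be a smooth symmetric metric perturbation on ℝ⁴ satisfying the harmonic gauge condition ∂_b h^{ab} = (1/2) ∂^a h and the linearized vacuum Einstein equations R_{ab}[h] = 0. Define the linearized Lanczos potential L_{abc} = (1/2)( h_{c[a,b]} − (1/6) η_{c[a} h_{,b]} ). Then the linearized Weyl tensor C_{abcd}[L] built from L via the linearized Weyl–Lanczos formula satisfies the massless field equation ∂_d C^{abcd} = 0. -/
noncomputable section

/-- Points of flat spacetime ℝ⁴. -/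
abbrev Spacetime : Type := Fin 4 → ℝ

/-- A scalar field on spacetime. -/
abbrev ScalarField : Type := Spacetime → ℝ

/-- The Minkowski metric η = diag(1, -1, -1, -1); numerically equal to its inverse η^{ab}. -/
def η (a b : Fin 4) : ℝ := if a = b then (if a = 0 then 1 else -1) else 0

/-- The partial derivative ∂ₐ of a scalar field. -/
def pd (a : Fin 4) (f : ScalarField) : ScalarField := fun x => fderiv ℝ f x (Pi.single a 1)

/-- The trace h = η^{ab} h_{ab}. -/
def trh (h : Fin 4 → Fin 4 → ScalarField) : ScalarField := fun x => ∑ a, ∑ b, η a b * h a b x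

/-- The linearized Lanczos potential
L_{abc} = (1/2)(h_{c[a,b]} - (1/6) η_{c[a} h_{,b]}). -/
def Lanc (h : Fin 4 → Fin 4 → ScalarField) (a b c : Fin 4) : ScalarField := fun x =>
  (1/2) * ((1/2) * (pd b (h c a) x - pd a (h c b) x)
    - (1/6) * ((1/2) * (η c a * pd b (trh h) x - η c b * pd a (trh h) x)))

/-- The linearized Riemann tensor
R_{abcd}[h] = (1/2)(∂_b ∂_c h_{ad} + ∂_a ∂_d h_{bc} - ∂_a ∂_c h_{bd} - ∂_b ∂_d h_{ac}). -/
def Riem (h : Fin 4 → Fin 4 → ScalarField) (a b c d : Fin 4) : ScalarField := fun x =>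
  (1/2) * (pd b (pd c (h a d)) x + pd a (pd d (h b c)) x
    - pd a (pd c (h b d)) x - pd b (pd d (h a c)) x)

/-- The linearized Ricci tensor R_{ab}[h] = η^{cd} R_{acbd}[h]. -/
def Ric (h : Fin 4 → Fin 4 → ScalarField) (a b : Fin 4) : ScalarField := fun x =>
  ∑ c, ∑ d, η c d * Riem h a c b d x

/-- The linearized Ricci scalar R[h] = η^{ab} R_{ab}[h]. -/
def RS (h : Fin 4 → Fin 4 → ScalarField) : ScalarField := fun x => ∑ a, ∑ b, η a b * Ric h a b x

/-- The linearized Weyl tensor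
C_{abcd}[h] = R_{abcd} - (η_{a[c} R_{d]b} - η_{b[c} R_{d]a}) + (R/3) η_{a[c} η_{d]b}. -/
def Weyl (h : Fin 4 → Fin 4 → ScalarField) (a b c d : Fin 4) : ScalarField := fun x =>
  Riem h a b c d x
    - ((1/2) * (η a c * Ric h d b x - η a d * Ric h c b x)
      - (1/2) * (η b c * Ric h d a x - η b d * Ric h c a x))
    + (RS h x / 3) * ((1/2) * (η a c * η d b - η a d * η c b))

/-- L_{ab} = ∂^c L_{acb} - ∂_b (η^{cd} L_{acd}). -/
def Ldn (L : Fin 4 → Fin 4 → Fin 4 → ScalarField) (a b : Fin 4) : ScalarField := fun x =>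
  (∑ c, ∑ d, η c d * pd d (L a c b) x)
    - pd b (fun y => ∑ c, ∑ d, η c d * L a c d y) x

/-- L = η^{ab} L_{ab}. -/
def Ltr (L : Fin 4 → Fin 4 → Fin 4 → ScalarField) : ScalarField := fun x => ∑ a, ∑ b, η a b * Ldn L a b x

/-- The linearized Weyl–Lanczos formula:
C_{abcd}[L] = 2 L_{ab[c,d]} + 2 L_{cd[a,b]} - η_{a[c}(L_{|b|d]} + L_{d]b})
  + η_{b[c}(L_{|a|d]} + L_{d]a}) + (2L/3) η_{a[c} η_{d]b}. -/
def WL (L : Fin 4 → Fin 4 → Fin 4 → ScalarField) (a b c d : Fin 4) : ScalarField := fun x =>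
  2 * ((1/2) * (pd d (L a b c) x - pd c (L a b d) x))
    + 2 * ((1/2) * (pd b (L c d a) x - pd a (L c d b) x))
    - (1/2) * (η a c * (Ldn L b d x + Ldn L d b x) - η a d * (Ldn L b c x + Ldn L c b x))
    + (1/2) * (η b c * (Ldn L a d x + Ldn L d a x) - η b d * (Ldn L a c x + Ldn L c a x))
    + (2 * Ltr L x / 3) * ((1/2) * (η a c * η d b - η a d * η c b))

abbrev Sm (f : ScalarField) : Prop := ContDiff ℝ (⊤ : ℕ∞) f

lemma Sm.diff {f : ScalarField} (hf : Sm f) {x : Spacetime} : DifferentiableAt ℝ f x :=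
  (hf.differentiable (by simp)).differentiableAt

lemma Sm.pd {f : ScalarField} (hf : Sm f) (a : Fin 4) : Sm (pd a f) :=
  (ContinuousLinearMap.apply ℝ ℝ (Pi.single a 1 : Spacetime)).contDiff.comp
    (hf.fderiv_right (by simp))

-- eta lemmas
lemma eta_comm (a b : Fin 4) : η a b = η b a := by
  simp only [η]; rcases eq_or_ne a b with h | h
  · subst h; rfl
  · rw [if_neg h, if_neg (Ne.symm h)]

lemma eta_off {a b : Fin 4} (h : a ≠ b) : η a b = 0 := by simp [η, h]

lemma eta_sq (a : Fin 4) : η a a * η a a = 1 := by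
  fin_cases a <;> norm_num [η, Fin.ext_iff]

lemma sum_eta (a : Fin 4) (f : Fin 4 → ℝ) : ∑ e, η a e * f e = η a a * f a := by
  rw [Finset.sum_eq_single a]
  · intro b _ hb; rw [eta_off (Ne.symm hb), zero_mul]
  · intro hb; exact absurd (Finset.mem_univ a) hb

lemma sum_eta2 (a : Fin 4) (f : Fin 4 → ℝ) : ∑ e, η e e * (η e a * f e) = f a := by
  rw [Finset.sum_eq_single a]
  · rw [← mul_assoc, eta_sq, one_mul]
  · intro b _ hb; rw [eta_off hb, zero_mul, mul_zero]
  · intro hb; exact absurd (Finset.mem_univ a) hb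

lemma sum_eta_sq : ∑ e : Fin 4, η e e * η e e = 4 := by
  rw [Finset.sum_congr rfl fun e _ => eta_sq e]; norm_num

-- pd linearity (function level)
lemma pd_zeroF (a : Fin 4) : pd a (fun _ => (0:ℝ)) = fun _ => 0 := by
  funext x; simp [pd]

lemma pd_cmulF (a : Fin 4) (c : ℝ) {f : ScalarField} (hf : Sm f) :
    pd a (fun y => c * f y) = fun y => c * pd a f y := by
  funext x
  show fderiv ℝ (fun y => c * f y) x (Pi.single a 1) = _
  rw [fderiv_const_mul hf.diff]
  simp [pd]

lemma pd_sumF (a : Fin 4) (c : Fin 4 → ℝ) (F : Fin 4 → ScalarField) (hF : ∀ i, Sm (F i)) :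
    pd a (fun y => ∑ i, c i * F i y) = fun y => ∑ i, c i * pd a (F i) y := by
  funext x
  show fderiv ℝ (fun y => ∑ i, c i * F i y) x (Pi.single a 1) = _
  rw [fderiv_fun_sum (fun i _ => ((hF i).diff).const_mul (c i))]
  rw [ContinuousLinearMap.sum_apply]
  refine Finset.sum_congr rfl fun i _ => ?_
  rw [fderiv_const_mul (hF i).diff]
  simp [pd]

lemma pd_lin4F (a : Fin 4) (c1 c2 c3 c4 : ℝ) {f1 f2 f3 f4 : ScalarField}
    (h1 : Sm f1) (h2 : Sm f2) (h3 : Sm f3) (h4 : Sm f4) :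
    pd a (fun y => c1 * f1 y + c2 * f2 y + c3 * f3 y + c4 * f4 y)
      = fun y => c1 * pd a f1 y + c2 * pd a f2 y + c3 * pd a f3 y + c4 * pd a f4 y := by
  funext x
  have hd : HasFDerivAt (fun y => c1 * f1 y + c2 * f2 y + c3 * f3 y + c4 * f4 y)
      (c1 • fderiv ℝ f1 x + c2 • fderiv ℝ f2 x + c3 • fderiv ℝ f3 x + c4 • fderiv ℝ f4 x) x := by
    exact (((h1.diff.hasFDerivAt.const_mul c1).add (h2.diff.hasFDerivAt.const_mul c2)).add
      (h3.diff.hasFDerivAt.const_mul c3)).add (h4.diff.hasFDerivAt.const_mul c4)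
  show fderiv ℝ _ x (Pi.single a 1) = _
  rw [hd.fderiv]
  simp [pd, smul_eq_mul]

lemma pd_pd_eq {f : ScalarField} (hf : Sm f) (v w : Spacetime) (x : Spacetime) :
    fderiv ℝ (fun y => fderiv ℝ f y w) x v = fderiv ℝ (fderiv ℝ f) x v w := by
  have hc : DifferentiableAt ℝ (fderiv ℝ f) x :=
    ((hf.fderiv_right (m := 1) (WithTop.coe_le_coe.mpr le_top)).differentiable one_ne_zero).differentiableAt
  have := fderiv_clm_apply (c := fderiv ℝ f) (u := fun _ => w) hc (differentiableAt_const w)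
  rw [show (fun y => fderiv ℝ f y w) = (fun y => (fderiv ℝ f y) ((fun _ : Spacetime => w) y)) from rfl, this]
  simp

lemma pd_commF {f : ScalarField} (hf : Sm f) (a b : Fin 4) :
    pd a (pd b f) = pd b (pd a f) := by
  funext x
  have hsymm : IsSymmSndFDerivAt ℝ f x := hf.contDiffAt.isSymmSndFDerivAt (by rw [minSmoothness_of_isRCLikeNormedField]; exact WithTop.coe_le_coe.mpr le_top)
  show fderiv ℝ (pd b f) x (Pi.single a 1) = fderiv ℝ (pd a f) x (Pi.single b 1)
  rw [show pd b f = fun y => fderiv ℝ f y (Pi.single b 1) from rfl,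
      show pd a f = fun y => fderiv ℝ f y (Pi.single a 1) from rfl,
      pd_pd_eq hf, pd_pd_eq hf]
  exact hsymm _ _

section Main
variable (h : Fin 4 → Fin 4 → ScalarField)
variable (hsmooth : ∀ a b, ContDiff ℝ (⊤ : ℕ∞) (h a b))
variable (hsym : ∀ a b, h a b = h b a)

lemma trh_eq : trh h = fun x => ∑ a, η a a * h a a x := by
  funext x
  exact Finset.sum_congr rfl fun a _ => sum_eta a _

include hsmooth

lemma Sm_trh : Sm (trh h) := by
  rw [trh_eq]
  exact ContDiff.sum fun i _ => contDiff_const.mul (hsmooth i i)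

lemma gaugeF
    (hgauge : ∀ a, ∀ x : Spacetime,
      (∑ b, pd b (fun y => ∑ c, ∑ d, η a c * η b d * h c d y) x)
        = (1/2) * ∑ b, η a b * pd b (trh h) x) (a : Fin 4) :
    (fun x => ∑ b, η b b * pd b (h a b) x) = fun x => (1/2) * pd a (trh h) x := by
  funext x
  have hg := hgauge a x
  have hcol : ∀ b : Fin 4, (fun y => ∑ c, ∑ d, η a c * η b d * h c d y)
      = fun y => (η a a * η b b) * h a b y := by
    intro b; funext y
    have : ∀ c : Fin 4, ∑ d, η a c * η b d * h c d y = η a c * (η b b * h c b y) := by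
      intro c
      rw [show (fun d => η a c * η b d * h c d y) = fun d => η a c * (η b d * h c d y) by
        funext d; ring]
      rw [← Finset.mul_sum, sum_eta]
    rw [Finset.sum_congr rfl fun c _ => this c]
    rw [show (fun c => η a c * (η b b * h c b y)) = fun c => η a c * (η b b * h c b y) from rfl]
    rw [sum_eta a (fun c => η b b * h c b y)]
    ring
  rw [Finset.sum_congr rfl (fun b _ => by rw [hcol b]), sum_eta a] at hg
  have hg2 : ∀ b : Fin 4, pd b (fun y => η a a * η b b * h a b y) x
      = η a a * η b b * pd b (h a b) x := by
    intro b
    rw [show (fun y => η a a * η b b * h a b y) = fun y => (η a a * η b b) * h a b y from rfl,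
      pd_cmulF b _ (hsmooth a b)]
  rw [Finset.sum_congr rfl (fun b _ => hg2 b)] at hg
  have hg3 : ∑ b, η a a * η b b * pd b (h a b) x = η a a * ∑ b, η b b * pd b (h a b) x := by
    rw [Finset.mul_sum]; exact Finset.sum_congr rfl fun b _ => by ring
  rw [hg3] at hg
  have := congrArg (fun t => η a a * t) hg
  calc ∑ b, η b b * pd b (h a b) x
      = η a a * (η a a * ∑ b, η b b * pd b (h a b) x) := by rw [← mul_assoc, eta_sq, one_mul]
    _ = η a a * (1/2 * (η a a * pd a (trh h) x)) := by rw [hg]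
    _ = (η a a * η a a) * (1/2 * pd a (trh h) x) := by ring
    _ = 1/2 * pd a (trh h) x := by rw [eta_sq, one_mul]


lemma div_chain
    (hg : ∀ a, (fun x => ∑ b, η b b * pd b (h a b) x) = fun x => (1/2) * pd a (trh h) x)
    (a b : Fin 4) (x : Spacetime) :
    ∑ c, ∑ d, η c d * pd d (pd a (h b c)) x = 1/2 * pd a (pd b (trh h)) x := by
  calc ∑ c, ∑ d, η c d * pd d (pd a (h b c)) x
      = ∑ c, η c c * pd c (pd a (h b c)) x :=
        Finset.sum_congr rfl fun c _ => sum_eta c _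
    _ = ∑ c, η c c * pd a (pd c (h b c)) x := by
        refine Finset.sum_congr rfl fun c _ => ?_
        rw [pd_commF (hsmooth b c) c a]
    _ = pd a (fun y => ∑ c, η c c * pd c (h b c) y) x := by
        rw [pd_sumF a (fun c => η c c) (fun c => pd c (h b c))
          (fun i => Sm.pd (hsmooth b i) i)]
    _ = pd a (fun y => 1/2 * pd b (trh h) y) x := by rw [hg b]
    _ = 1/2 * pd a (pd b (trh h)) x := by
        rw [pd_cmulF a (1/2) (Sm.pd (Sm_trh h hsmooth) b)]

lemma boxF
    (hg : ∀ a, (fun x => ∑ b, η b b * pd b (h a b) x) = fun x => (1/2) * pd a (trh h) x)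
    (hricci : ∀ a b, ∀ x : Spacetime,
      (1/2) * ((∑ c, ∑ d, η c d * pd d (pd a (h b c)) x)
        + (∑ c, ∑ d, η c d * pd d (pd b (h a c)) x)
        - (∑ c, ∑ d, η c d * pd d (pd c (h a b)) x)
        - pd a (pd b (trh h)) x) = 0)
    (a b : Fin 4) :
    (fun x => ∑ c, η c c * pd c (pd c (h a b)) x) = fun _ => 0 := by
  funext x
  have hr := hricci a b x
  have e1 := div_chain h hsmooth hg a b x
  have e2 := div_chain h hsmooth hg b a x
  have e2' : pd b (pd a (trh h)) x = pd a (pd b (trh h)) x := by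
    rw [pd_commF (Sm_trh h hsmooth) b a]
  have e3 : ∑ c, ∑ d, η c d * pd d (pd c (h a b)) x
      = ∑ c, η c c * pd c (pd c (h a b)) x :=
    Finset.sum_congr rfl fun c _ => sum_eta c _
  rw [e1, e2, e2', e3] at hr
  linarith

lemma boxTF
    (hg : ∀ a, (fun x => ∑ b, η b b * pd b (h a b) x) = fun x => (1/2) * pd a (trh h) x)
    (hricci : ∀ a b, ∀ x : Spacetime,
      (1/2) * ((∑ c, ∑ d, η c d * pd d (pd a (h b c)) x)
        + (∑ c, ∑ d, η c d * pd d (pd b (h a c)) x)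
        - (∑ c, ∑ d, η c d * pd d (pd c (h a b)) x)
        - pd a (pd b (trh h)) x) = 0) :
    (fun x => ∑ c, η c c * pd c (pd c (trh h)) x) = fun _ => 0 := by
  funext x
  have e : ∀ c : Fin 4, pd c (pd c (trh h)) x = ∑ a, η a a * pd c (pd c (h a a)) x := by
    intro c
    rw [trh_eq h, pd_sumF c (fun a => η a a) (fun a => h a a) (fun i => hsmooth i i),
      pd_sumF c (fun a => η a a) (fun a => pd c (h a a)) (fun i => Sm.pd (hsmooth i i) c)]
  calc ∑ c, η c c * pd c (pd c (trh h)) x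
      = ∑ c, ∑ a, η a a * (η c c * pd c (pd c (h a a)) x) := by
        refine Finset.sum_congr rfl fun c _ => ?_
        rw [e c, Finset.mul_sum]
        exact Finset.sum_congr rfl fun a _ => by ring
    _ = ∑ a, ∑ c, η a a * (η c c * pd c (pd c (h a a)) x) := Finset.sum_comm
    _ = ∑ a, η a a * ∑ c, η c c * pd c (pd c (h a a)) x := by
        exact Finset.sum_congr rfl fun a _ => by rw [Finset.mul_sum]
    _ = ∑ a : Fin 4, η a a * 0 := by
        refine Finset.sum_congr rfl fun a _ => ?_
        rw [congrFun (boxF h hsmooth hg hricci a a) x]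
    _ = 0 := by simp


include hsym

lemma traceLF
    (hg : ∀ a, (fun x => ∑ b, η b b * pd b (h a b) x) = fun x => (1/2) * pd a (trh h) x)
    (a : Fin 4) :
    (fun y => ∑ c, ∑ d, η c d * Lanc h a c d y) = fun _ => 0 := by
  funext y
  have expand : ∀ c : Fin 4, ∑ d, η c d * Lanc h a c d y
      = (1/4)*(η c c * pd c (h a c) y) - (1/4)*(η c c * pd a (h c c) y)
        - (1/24)*(η c c * (η c a * pd c (trh h) y))
        + (1/24)*((η c c * η c c) * pd a (trh h) y) := by
    intro c
    rw [sum_eta c (fun d => Lanc h a c d y)]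
    simp only [Lanc]
    rw [hsym c a]
    ring
  rw [Finset.sum_congr rfl fun c _ => expand c]
  rw [Finset.sum_add_distrib, Finset.sum_sub_distrib, Finset.sum_sub_distrib,
    ← Finset.mul_sum, ← Finset.mul_sum, ← Finset.mul_sum, ← Finset.mul_sum]
  have hA : ∑ c, η c c * pd c (h a c) y = 1/2 * pd a (trh h) y := congrFun (hg a) y
  have hB : ∑ c, η c c * pd a (h c c) y = pd a (trh h) y := by
    have e := congrFun (pd_sumF a (fun c => η c c) (fun c => h c c) (fun i => hsmooth i i)) y
    rw [← e, ← trh_eq h]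
  have hC : ∑ c, η c c * (η c a * pd c (trh h) y) = pd a (trh h) y :=
    sum_eta2 a (fun e => pd e (trh h) y)
  have hD : ∑ c, (η c c * η c c) * pd a (trh h) y = 4 * pd a (trh h) y := by
    rw [← Finset.sum_mul, sum_eta_sq]
  rw [hA, hB, hC, hD]
  ring

omit hsym in
lemma pd_Lanc (e a b c : Fin 4) (x : Spacetime) :
    pd e (Lanc h a b c) x
      = 1/4 * pd e (pd b (h c a)) x - 1/4 * pd e (pd a (h c b)) x
        - 1/24 * (η c a * pd e (pd b (trh h)) x) + 1/24 * (η c b * pd e (pd a (trh h)) x) := by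
  have hL : Lanc h a b c = fun y => (1/4) * pd b (h c a) y + (-(1/4)) * pd a (h c b) y
      + (-(1/24) * η c a) * pd b (trh h) y + ((1/24) * η c b) * pd a (trh h) y := by
    funext y; simp only [Lanc]; ring
  rw [hL, pd_lin4F e _ _ _ _ (Sm.pd (hsmooth c a) b) (Sm.pd (hsmooth c b) a)
    (Sm.pd (Sm_trh h hsmooth) b) (Sm.pd (Sm_trh h hsmooth) a)]
  ring

lemma LdnF
    (hg : ∀ a, (fun x => ∑ b, η b b * pd b (h a b) x) = fun x => (1/2) * pd a (trh h) x)
    (hricci : ∀ a b, ∀ x : Spacetime,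
      (1/2) * ((∑ c, ∑ d, η c d * pd d (pd a (h b c)) x)
        + (∑ c, ∑ d, η c d * pd d (pd b (h a c)) x)
        - (∑ c, ∑ d, η c d * pd d (pd c (h a b)) x)
        - pd a (pd b (trh h)) x) = 0)
    (a b : Fin 4) :
    Ldn (Lanc h) a b = fun x => -(1/12) * pd a (pd b (trh h)) x := by
  funext x
  simp only [Ldn]
  rw [traceLF h hsmooth hsym hg a, pd_zeroF b]
  have expand : ∀ c : Fin 4, ∑ d, η c d * pd d (Lanc h a c b) x
      = (1/4)*(η c c * pd c (pd c (h a b)) x) - (1/4)*(η c c * pd c (pd a (h b c)) x)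
        - (1/24)*(η b a * (η c c * pd c (pd c (trh h)) x))
        + (1/24)*(η c c * (η c b * pd c (pd a (trh h)) x)) := by
    intro c
    rw [sum_eta c (fun d => pd d (Lanc h a c b) x), pd_Lanc h hsmooth c a c b x,
      hsym b a, eta_comm b c]
    ring
  rw [Finset.sum_congr rfl fun c _ => expand c]
  rw [Finset.sum_add_distrib, Finset.sum_sub_distrib, Finset.sum_sub_distrib]
  simp only [← Finset.mul_sum]
  have hA : ∑ c, η c c * pd c (pd c (h a b)) x = 0 :=
    congrFun (boxF h hsmooth hg hricci a b) x
  have hB : ∑ c, η c c * pd c (pd a (h b c)) x = 1/2 * pd a (pd b (trh h)) x := by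
    have := div_chain h hsmooth hg a b x
    rw [Finset.sum_congr rfl (fun c _ => sum_eta c (fun d => pd d (pd a (h b c)) x))] at this
    exact this
  have hC0 : ∑ c, η c c * pd c (pd c (trh h)) x = 0 :=
    congrFun (boxTF h hsmooth hg hricci) x
  have hD : ∑ c, η c c * (η c b * pd c (pd a (trh h)) x) = pd b (pd a (trh h)) x :=
    sum_eta2 b (fun e => pd e (pd a (trh h)) x)
  have hD' : pd b (pd a (trh h)) x = pd a (pd b (trh h)) x := by
    rw [pd_commF (Sm_trh h hsmooth) b a]
  rw [hA, hB, hC0, hD, hD']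
  ring

lemma Ltr_val
    (hg : ∀ a, (fun x => ∑ b, η b b * pd b (h a b) x) = fun x => (1/2) * pd a (trh h) x)
    (hricci : ∀ a b, ∀ x : Spacetime,
      (1/2) * ((∑ c, ∑ d, η c d * pd d (pd a (h b c)) x)
        + (∑ c, ∑ d, η c d * pd d (pd b (h a c)) x)
        - (∑ c, ∑ d, η c d * pd d (pd c (h a b)) x)
        - pd a (pd b (trh h)) x) = 0)
    (x : Spacetime) : Ltr (Lanc h) x = 0 := by
  simp only [Ltr]
  calc ∑ a, ∑ b, η a b * Ldn (Lanc h) a b x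
      = ∑ a, η a a * Ldn (Lanc h) a a x :=
        Finset.sum_congr rfl fun a _ => sum_eta a _
    _ = ∑ a, (-(1/12)) * (η a a * pd a (pd a (trh h)) x) := by
        refine Finset.sum_congr rfl fun a _ => ?_
        rw [LdnF h hsmooth hsym hg hricci a a]
        ring
    _ = (-(1/12)) * ∑ a, η a a * pd a (pd a (trh h)) x := by rw [← Finset.mul_sum]
    _ = 0 := by rw [congrFun (boxTF h hsmooth hg hricci) x]; ring


lemma WLF
    (hg : ∀ a, (fun x => ∑ b, η b b * pd b (h a b) x) = fun x => (1/2) * pd a (trh h) x)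
    (hricci : ∀ a b, ∀ x : Spacetime,
      (1/2) * ((∑ c, ∑ d, η c d * pd d (pd a (h b c)) x)
        + (∑ c, ∑ d, η c d * pd d (pd b (h a c)) x)
        - (∑ c, ∑ d, η c d * pd d (pd c (h a b)) x)
        - pd a (pd b (trh h)) x) = 0)
    (a b c d : Fin 4) :
    WL (Lanc h) a b c d = fun x => (1/2) * (pd b (pd d (h a c)) x + pd a (pd c (h b d)) x
      - pd a (pd d (h b c)) x - pd b (pd c (h a d)) x) := by
  funext x
  simp only [WL]
  rw [pd_Lanc h hsmooth d a b c x, pd_Lanc h hsmooth c a b d x,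
      pd_Lanc h hsmooth b c d a x, pd_Lanc h hsmooth a c d b x]
  simp only [LdnF h hsmooth hsym hg hricci]
  rw [Ltr_val h hsmooth hsym hg hricci x]
  rw [hsym c a, hsym c b, hsym d a, hsym d b]
  rw [pd_commF (hsmooth a c) d b, pd_commF (hsmooth b c) d a,
      pd_commF (hsmooth a d) c b, pd_commF (hsmooth b d) c a]
  rw [pd_commF (Sm_trh h hsmooth) d b, pd_commF (Sm_trh h hsmooth) c b,
      pd_commF (Sm_trh h hsmooth) d a, pd_commF (Sm_trh h hsmooth) c a]
  rw [eta_comm c a, eta_comm c b, eta_comm d a, eta_comm d b]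
  ring


end Main

/-- If the smooth symmetric metric perturbation `h` satisfies the harmonic
gauge condition ∂_b h^{ab} = (1/2) ∂^a h and the linearized vacuum Einstein equations
R_{ab}[h] = 0, then the linearized Weyl tensor built from the linearized Lanczos potential
L_{abc} = (1/2)(h_{c[a,b]} - (1/6) η_{c[a} h_{,b]}) via the linearized Weyl–Lanczos formula
satisfies the massless field equation ∂_d C^{abcd} = 0. -/
theorem massless_field_equation_of_lanczos_weyl
    (h : Fin 4 → Fin 4 → ScalarField)
    (hsmooth : ∀ a b, ContDiff ℝ (⊤ : ℕ∞) (h a b))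
    (hsym : ∀ a b, h a b = h b a)
    (hgauge : ∀ a, ∀ x : Spacetime,
      (∑ b, pd b (fun y => ∑ c, ∑ d, η a c * η b d * h c d y) x)
        = (1/2) * ∑ b, η a b * pd b (trh h) x)
    (hricci : ∀ a b, ∀ x : Spacetime,
      (1/2) * ((∑ c, ∑ d, η c d * pd d (pd a (h b c)) x)
        + (∑ c, ∑ d, η c d * pd d (pd b (h a c)) x)
        - (∑ c, ∑ d, η c d * pd d (pd c (h a b)) x)
        - pd a (pd b (trh h)) x) = 0) :
    ∀ a b c, ∀ x : Spacetime,
      (∑ d, pd d (fun y => ∑ e, ∑ f, ∑ g, ∑ k,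
        η a e * η b f * η c g * η d k * WL (Lanc h) e f g k y) x) = 0 := by
  intro a b c x
  have hg : ∀ a, (fun x => ∑ b, η b b * pd b (h a b) x) = fun x => (1/2) * pd a (trh h) x :=
    gaugeF h hsmooth hgauge
  have hT : Sm (trh h) := Sm_trh h hsmooth
  -- collapse the η contractions
  have hcol : ∀ d : Fin 4, (fun y => ∑ e, ∑ f, ∑ g, ∑ k,
      η a e * η b f * η c g * η d k * WL (Lanc h) e f g k y)
      = fun y => (η a a * η b b * η c c * η d d) * WL (Lanc h) a b c d y := by
    intro d; funext y
    have c1 : ∀ e f g : Fin 4, ∑ k, η a e * η b f * η c g * η d k * WL (Lanc h) e f g k y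
        = η a e * (η b f * (η c g * (η d d * WL (Lanc h) e f g d y))) := by
      intro e f g
      calc ∑ k, η a e * η b f * η c g * η d k * WL (Lanc h) e f g k y
          = ∑ k, (η a e * (η b f * η c g)) * (η d k * WL (Lanc h) e f g k y) :=
            Finset.sum_congr rfl fun k _ => by ring
        _ = (η a e * (η b f * η c g)) * ∑ k, η d k * WL (Lanc h) e f g k y := by
            rw [Finset.mul_sum]
        _ = _ := by rw [sum_eta d (fun k => WL (Lanc h) e f g k y)]; ring
    have c2 : ∀ e f : Fin 4, ∑ g, ∑ k, η a e * η b f * η c g * η d k * WL (Lanc h) e f g k y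
        = η a e * (η b f * (η c c * (η d d * WL (Lanc h) e f c d y))) := by
      intro e f
      calc ∑ g, ∑ k, η a e * η b f * η c g * η d k * WL (Lanc h) e f g k y
          = ∑ g, (η a e * η b f) * (η c g * (η d d * WL (Lanc h) e f g d y)) :=
            Finset.sum_congr rfl fun g _ => by rw [c1 e f g]; ring
        _ = (η a e * η b f) * ∑ g, η c g * (η d d * WL (Lanc h) e f g d y) := by
            rw [Finset.mul_sum]
        _ = _ := by rw [sum_eta c (fun g => η d d * WL (Lanc h) e f g d y)]; ring
    have c3 : ∀ e : Fin 4, ∑ f, ∑ g, ∑ k, η a e * η b f * η c g * η d k * WL (Lanc h) e f g k y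
        = η a e * (η b b * (η c c * (η d d * WL (Lanc h) e b c d y))) := by
      intro e
      calc ∑ f, ∑ g, ∑ k, η a e * η b f * η c g * η d k * WL (Lanc h) e f g k y
          = ∑ f, η a e * (η b f * (η c c * (η d d * WL (Lanc h) e f c d y))) :=
            Finset.sum_congr rfl fun f _ => by rw [c2 e f]
        _ = η a e * ∑ f, η b f * (η c c * (η d d * WL (Lanc h) e f c d y)) := by
            rw [Finset.mul_sum]
        _ = _ := by rw [sum_eta b (fun f => η c c * (η d d * WL (Lanc h) e f c d y))]
    calc ∑ e, ∑ f, ∑ g, ∑ k, η a e * η b f * η c g * η d k * WL (Lanc h) e f g k y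
        = ∑ e, η a e * (η b b * (η c c * (η d d * WL (Lanc h) e b c d y))) :=
          Finset.sum_congr rfl fun e _ => c3 e
      _ = η a a * (η b b * (η c c * (η d d * WL (Lanc h) a b c d y))) :=
          sum_eta a (fun e => η b b * (η c c * (η d d * WL (Lanc h) e b c d y)))
      _ = _ := by ring
  -- rewrite each summand through WLF and pd linearity
  have hfun : ∀ d : Fin 4, (fun y => ∑ e, ∑ f, ∑ g, ∑ k,
      η a e * η b f * η c g * η d k * WL (Lanc h) e f g k y)
      = fun y => (η a a * η b b * η c c * η d d * (1/2)) * pd b (pd d (h a c)) y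
        + (η a a * η b b * η c c * η d d * (1/2)) * pd a (pd c (h b d)) y
        + (-(η a a * η b b * η c c * η d d * (1/2))) * pd a (pd d (h b c)) y
        + (-(η a a * η b b * η c c * η d d * (1/2))) * pd b (pd c (h a d)) y := by
    intro d
    rw [hcol d]
    funext y
    simp only [WLF h hsmooth hsym hg hricci a b c d]
    ring
  have hval : ∀ d : Fin 4, pd d (fun y => ∑ e, ∑ f, ∑ g, ∑ k,
      η a e * η b f * η c g * η d k * WL (Lanc h) e f g k y) x
      = (η a a * η b b * η c c * (1/2))
          * (η d d * pd d (pd b (pd d (h a c))) x + η d d * pd d (pd a (pd c (h b d))) x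
            - η d d * pd d (pd a (pd d (h b c))) x - η d d * pd d (pd b (pd c (h a d))) x) := by
    intro d
    rw [hfun d, pd_lin4F d _ _ _ _
      (Sm.pd (Sm.pd (hsmooth a c) d) b) (Sm.pd (Sm.pd (hsmooth b d) c) a)
      (Sm.pd (Sm.pd (hsmooth b c) d) a) (Sm.pd (Sm.pd (hsmooth a d) c) b)]
    ring
  rw [Finset.sum_congr rfl fun d _ => hval d]
  rw [← Finset.mul_sum]
  rw [Finset.sum_sub_distrib, Finset.sum_sub_distrib, Finset.sum_add_distrib]
  have hQ1 : ∑ d : Fin 4, η d d * pd d (pd b (pd d (h a c))) x = 0 := by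
    calc ∑ d : Fin 4, η d d * pd d (pd b (pd d (h a c))) x
        = ∑ d : Fin 4, η d d * pd b (pd d (pd d (h a c))) x := by
          refine Finset.sum_congr rfl fun d _ => ?_
          rw [pd_commF (Sm.pd (hsmooth a c) d) d b]
      _ = pd b (fun y => ∑ d : Fin 4, η d d * pd d (pd d (h a c)) y) x :=
          (congrFun (pd_sumF b (fun d => η d d)
            (fun d => pd d (pd d (h a c))) (fun i => Sm.pd (Sm.pd (hsmooth a c) i) i)) x).symm
      _ = 0 := by
          rw [boxF h hsmooth hg hricci a c, pd_zeroF b]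
  have hQ3 : ∑ d : Fin 4, η d d * pd d (pd a (pd d (h b c))) x = 0 := by
    calc ∑ d : Fin 4, η d d * pd d (pd a (pd d (h b c))) x
        = ∑ d : Fin 4, η d d * pd a (pd d (pd d (h b c))) x := by
          refine Finset.sum_congr rfl fun d _ => ?_
          rw [pd_commF (Sm.pd (hsmooth b c) d) d a]
      _ = pd a (fun y => ∑ d : Fin 4, η d d * pd d (pd d (h b c)) y) x :=
          (congrFun (pd_sumF a (fun d => η d d)
            (fun d => pd d (pd d (h b c))) (fun i => Sm.pd (Sm.pd (hsmooth b c) i) i)) x).symm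
      _ = 0 := by
          rw [boxF h hsmooth hg hricci b c, pd_zeroF a]
  have hQ2 : ∑ d : Fin 4, η d d * pd d (pd a (pd c (h b d))) x
      = 1/2 * pd a (pd c (pd b (trh h))) x := by
    calc ∑ d : Fin 4, η d d * pd d (pd a (pd c (h b d))) x
        = ∑ d : Fin 4, η d d * pd a (pd c (pd d (h b d))) x := by
          refine Finset.sum_congr rfl fun d _ => ?_
          rw [pd_commF (Sm.pd (hsmooth b d) c) d a, pd_commF (hsmooth b d) d c]
      _ = pd a (fun y => ∑ d : Fin 4, η d d * pd c (pd d (h b d)) y) x :=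
          (congrFun (pd_sumF a (fun d => η d d)
            (fun d => pd c (pd d (h b d))) (fun i => Sm.pd (Sm.pd (hsmooth b i) i) c)) x).symm
      _ = pd a (pd c (fun z => ∑ d : Fin 4, η d d * pd d (h b d) z)) x := by
          rw [pd_sumF c (fun d => η d d) (fun d => pd d (h b d)) (fun i => Sm.pd (hsmooth b i) i)]
      _ = pd a (pd c (fun z => 1/2 * pd b (trh h) z)) x := by rw [hg b]
      _ = 1/2 * pd a (pd c (pd b (trh h))) x := by
          rw [pd_cmulF c (1/2) (Sm.pd hT b), pd_cmulF a (1/2) (Sm.pd (Sm.pd hT b) c)]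
  have hQ4 : ∑ d : Fin 4, η d d * pd d (pd b (pd c (h a d))) x
      = 1/2 * pd b (pd c (pd a (trh h))) x := by
    calc ∑ d : Fin 4, η d d * pd d (pd b (pd c (h a d))) x
        = ∑ d : Fin 4, η d d * pd b (pd c (pd d (h a d))) x := by
          refine Finset.sum_congr rfl fun d _ => ?_
          rw [pd_commF (Sm.pd (hsmooth a d) c) d b, pd_commF (hsmooth a d) d c]
      _ = pd b (fun y => ∑ d : Fin 4, η d d * pd c (pd d (h a d)) y) x :=
          (congrFun (pd_sumF b (fun d => η d d)
            (fun d => pd c (pd d (h a d))) (fun i => Sm.pd (Sm.pd (hsmooth a i) i) c)) x).symm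
      _ = pd b (pd c (fun z => ∑ d : Fin 4, η d d * pd d (h a d) z)) x := by
          rw [pd_sumF c (fun d => η d d) (fun d => pd d (h a d)) (fun i => Sm.pd (hsmooth a i) i)]
      _ = pd b (pd c (fun z => 1/2 * pd a (trh h) z)) x := by rw [hg a]
      _ = 1/2 * pd b (pd c (pd a (trh h))) x := by
          rw [pd_cmulF c (1/2) (Sm.pd hT a), pd_cmulF b (1/2) (Sm.pd (Sm.pd hT a) c)]
  have hQ24 : pd a (pd c (pd b (trh h))) x = pd b (pd c (pd a (trh h))) x := by
    rw [pd_commF hT c b, pd_commF (Sm.pd hT c) a b, pd_commF hT a c]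
  rw [hQ1, hQ2, hQ3, hQ4, hQ24]
  ring
end
end

section
/- Let h_{ab} and h'_{ab} be two smooth symmetric metric perturbations on ℝ⁴ that yield the same linearized Lanczos potential, i.e. (1/2)( h'_{c[a,b]} − (1/6) η_{c[a} h'_{,b]} ) = (1/2)( h_{c[a,b]} − (1/6) η_{c[a} h_{,b]} ) for all indices, and suppose the difference Δh_{ab} = h'_{ab} − h_{ab} satisfies the linearized vacuum Einstein equations R_{ab}[Δh] = 0. Then the linearized Riemann tensor of Δh vanishes identically. -/
noncomputable section

lemma pd_smooth {f : ScalarField} (hf : ContDiff ℝ (⊤ : ℕ∞) f) (a : Fin 4) :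
    ContDiff ℝ (⊤ : ℕ∞) (pd a f) :=
  (hf.fderiv_right (by simp)).clm_apply contDiff_const

lemma pd_comm {f : ScalarField} (hf : ContDiff ℝ (⊤ : ℕ∞) f) (a b : Fin 4) (x : Spacetime) :
    pd a (pd b f) x = pd b (pd a f) x := by
  have hd : Differentiable ℝ f := hf.differentiable (by simp)
  have hf' : ContDiff ℝ (⊤ : ℕ∞) (fderiv ℝ f) := hf.fderiv_right (by simp)
  have hdd : DifferentiableAt ℝ (fderiv ℝ f) x := (hf'.differentiable (by simp)) x
  have key : ∀ (c v : Fin 4),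
      pd c (fun y => fderiv ℝ f y (Pi.single v 1)) x
        = fderiv ℝ (fderiv ℝ f) x (Pi.single c 1) (Pi.single v 1) := by
    intro c v
    have h := fderiv_clm_apply (c := fderiv ℝ f) (u := fun _ => (Pi.single v 1 : Spacetime))
      hdd (differentiableAt_const _)
    simp only [pd, h]
    simp
  have sym := second_derivative_symmetric (f := f) (f' := fderiv ℝ f)
    (f'' := fderiv ℝ (fderiv ℝ f) x) (fun y => (hd y).hasFDerivAt) hdd.hasFDerivAt
  show pd a (fun y => fderiv ℝ f y (Pi.single b 1)) x
      = pd b (fun y => fderiv ℝ f y (Pi.single a 1)) x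
  rw [key a b, key b a, sym]

lemma pd_sub {f g : ScalarField} (hf : Differentiable ℝ f) (hg : Differentiable ℝ g)
    (a : Fin 4) (x : Spacetime) :
    pd a (fun y => f y - g y) x = pd a f x - pd a g x := by
  simp only [pd]
  rw [fderiv_fun_sub (hf x) (hg x)]
  simp

lemma pd_comb {f g u : ScalarField} (hf : Differentiable ℝ f) (hg : Differentiable ℝ g)
    (hu : Differentiable ℝ u) (p q : ℝ) (a : Fin 4) (x : Spacetime) :
    pd a (fun y => f y + p * g y - q * u y) x = pd a f x + p * pd a g x - q * pd a u x := by
  simp only [pd]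
  rw [fderiv_fun_sub (f := fun y => f y + p * g y) ((hf x).add ((hg x).const_mul p)) ((hu x).const_mul q),
    fderiv_fun_add (hf x) ((hg x).const_mul p), fderiv_const_mul (hg x), fderiv_const_mul (hu x)]
  simp


set_option maxHeartbeats 2000000 in
/-- If two smooth symmetric metric perturbations `h` and `h'` yield the same
linearized Lanczos potential, and their difference Δh satisfies the linearized vacuum
Einstein equations R_{ab}[Δh] = 0, then the linearized Riemann tensor of Δh vanishes. -/
theorem riemann_vanishes_of_same_lanczos
    (h h' : Fin 4 → Fin 4 → ScalarField)
    (hsmooth : ∀ a b, ContDiff ℝ (⊤ : ℕ∞) (h a b))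
    (hsmooth' : ∀ a b, ContDiff ℝ (⊤ : ℕ∞) (h' a b))
    (hsym : ∀ a b, h a b = h b a)
    (hsym' : ∀ a b, h' a b = h' b a)
    (hsame : ∀ a b c, ∀ x : Spacetime, Lanc h' a b c x = Lanc h a b c x)
    (hricci : ∀ a b, ∀ x : Spacetime,
      Ric (fun i j => fun y => h' i j y - h i j y) a b x = 0) :
    ∀ a b c d, ∀ x : Spacetime,
      Riem (fun i j => fun y => h' i j y - h i j y) a b c d x = 0 := by
  set k : Fin 4 → Fin 4 → ScalarField := fun i j => fun y => h' i j y - h i j y with hk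
  have hksmooth : ∀ a b, ContDiff ℝ (⊤ : ℕ∞) (k a b) := fun a b => (hsmooth' a b).sub (hsmooth a b)
  have hksym : ∀ a b, k a b = k b a := by
    intro a b; funext y; simp only [hk, hsym a b, hsym' a b]
  -- trace
  set T : ScalarField := trh k with hT
  have htrsmooth : ∀ (g : Fin 4 → Fin 4 → ScalarField),
      (∀ a b, ContDiff ℝ (⊤ : ℕ∞) (g a b)) → ContDiff ℝ (⊤ : ℕ∞) (trh g) := by
    intro g hg
    apply ContDiff.sum; intro a _; apply ContDiff.sum; intro b _
    exact contDiff_const.mul (hg a b)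
  have hTsmooth : ContDiff ℝ (⊤ : ℕ∞) T := htrsmooth k hksmooth
  have htr_sub : T = fun y => trh h' y - trh h y := by
    funext y
    simp only [hT, trh, hk, mul_sub, Finset.sum_sub_distrib]
  -- pd of k and T as differences
  have hpdk : ∀ a c d (x : Spacetime), pd a (k c d) x = pd a (h' c d) x - pd a (h c d) x := by
    intro a c d x
    exact pd_sub ((hsmooth' c d).differentiable (by simp)) ((hsmooth c d).differentiable (by simp)) a x
  have hpdT : ∀ a (x : Spacetime), pd a T x = pd a (trh h') x - pd a (trh h) x := by
    intro a x
    rw [htr_sub]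
    exact pd_sub ((htrsmooth h' hsmooth').differentiable (by simp))
      ((htrsmooth h hsmooth).differentiable (by simp)) a x
  -- first-order relation from equal Lanczos potentials
  have hF : ∀ a b c (x : Spacetime),
      pd b (k c a) x - pd a (k c b) x
        = (1/6) * (η c a * pd b T x - η c b * pd a T x) := by
    intro a b c x
    have hs := hsame a b c x
    simp only [Lanc] at hs
    rw [hpdk, hpdk, hpdT, hpdT]
    linear_combination 4 * hs
  -- differentiate it
  have hF2 : ∀ a b c d (x : Spacetime),
      pd d (pd b (k c a)) x - pd d (pd a (k c b)) x
        = (1/6) * (η c a * pd d (pd b T) x - η c b * pd d (pd a T) x) := by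
    intro a b c d x
    have hfun : pd b (k c a)
        = fun y => pd a (k c b) y + (η c a / 6) * pd b T y - (η c b / 6) * pd a T y := by
      funext y
      have := hF a b c y
      ring_nf
      ring_nf at this
      linarith [this]
    have := pd_comb (f := pd a (k c b)) (g := pd b T) (u := pd a T)
      ((pd_smooth (hksmooth c b) a).differentiable (by simp))
      ((pd_smooth hTsmooth b).differentiable (by simp))
      ((pd_smooth hTsmooth a).differentiable (by simp))
      (η c a / 6) (η c b / 6) d x
    rw [hfun, this]
    ring
  -- Riemann tensor in terms of second derivatives of T
  have R_eq : ∀ a b c d (x : Spacetime),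
      Riem k a b c d x
        = (1/12) * (η d a * pd c (pd b T) x - η d b * pd c (pd a T) x
          - η c a * pd d (pd b T) x + η c b * pd d (pd a T) x) := by
    intro a b c d x
    simp only [Riem]
    rw [pd_comm (hksmooth a d) b c x, pd_comm (hksmooth b d) a c x,
      pd_comm (hksmooth b c) a d x, pd_comm (hksmooth a c) b d x]
    rw [hksym a d, hksym b d, hksym a c, hksym b c]
    have h1 := hF2 a b d c x
    have h2 := hF2 a b c d x
    linarith
  -- Ricci equations
  have hric' : ∀ a b (x : Spacetime),
      -2 * pd a (pd b T) x - η a b * (pd 0 (pd 0 T) x - pd 1 (pd 1 T) x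
        - pd 2 (pd 2 T) x - pd 3 (pd 3 T) x) = 0 := by
    intro a b x
    have hr := hricci a b x
    simp only [Ric, Fin.sum_univ_four] at hr
    simp only [R_eq] at hr
    fin_cases a <;> fin_cases b <;>
      simp [η] at hr ⊢ <;>
      linarith [pd_comm hTsmooth 0 1 x, pd_comm hTsmooth 0 2 x, pd_comm hTsmooth 0 3 x,
        pd_comm hTsmooth 1 2 x, pd_comm hTsmooth 1 3 x, pd_comm hTsmooth 2 3 x, hr]
  have hbox : ∀ x : Spacetime, pd 0 (pd 0 T) x - pd 1 (pd 1 T) x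
      - pd 2 (pd 2 T) x - pd 3 (pd 3 T) x = 0 := by
    intro x
    have e0 := hric' 0 0 x
    have e1 := hric' 1 1 x
    have e2 := hric' 2 2 x
    have e3 := hric' 3 3 x
    simp [η] at e0 e1 e2 e3
    linarith
  have hS0 : ∀ a b (x : Spacetime), pd a (pd b T) x = 0 := by
    intro a b x
    have := hric' a b x
    rw [hbox x] at this
    linarith
  intro a b c d x
  rw [R_eq a b c d x]
  simp only [hS0]
  ring
end
end
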